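/- arXiv:1901.11323 — 3 statements merged into one kernel-verified Lean document; each statement's English description precedes it below -/
import Mathlib

section
/- (Lemma 3.1(ii), pointwise form.) Let c > 0 and η, τ ∈ ℝ with η² − τ² = −4c², and let ν ∈ ℝ³ be a unit vector. Then for all u, v ∈ ℂ⁴ the pair (u,v) satisfies the (η,τ)-jump condition if and only if ( 2c I₄ − i(α·ν)(η I₄ + τ β) ) u = 0 and ( 2c I₄ + i(α·ν)(η I₄ + τ β) ) v = 0. -/
/-!
With `A = α·ν` and `B = A (η + τβ)`, the relations `A² = |ν|² = 1`, `β² = 1`, `Aβ = -βA` give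
`B² = η² - τ² = k²` for `k = 2ci ≠ 0`. Multiplying the jump condition by `2A` turns it into
`B(u + v) = -k(u - v)`; applying `B` once more yields `B(u - v) = -k(u + v)`, so `u` and `v` are
eigenvectors of `B` for `-k` and `k`, which are exactly the two confinement equations.
-/

open Matrix

noncomputable section

/-- The Pauli matrices. -/
def pauli : Fin 3 → Matrix (Fin 2) (Fin 2) ℂ
  | 0 => !![0, 1; 1, 0]
  | 1 => !![0, -Complex.I; Complex.I, 0]
  | 2 => !![1, 0; 0, -1]

/-- The Dirac matrices α₁, α₂, α₃. -/
def diracAlpha (j : Fin 3) : Matrix (Fin 4) (Fin 4) ℂ :=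
  Matrix.reindex finSumFinEquiv finSumFinEquiv (Matrix.fromBlocks 0 (pauli j) (pauli j) 0)

/-- The Dirac matrix β. -/
def diracBeta : Matrix (Fin 4) (Fin 4) ℂ :=
  Matrix.reindex finSumFinEquiv finSumFinEquiv ((Matrix.fromBlocks 1 0 0 (-1) : Matrix (Fin 2 ⊕ Fin 2) (Fin 2 ⊕ Fin 2) ℂ))

/-- The matrix γ₅. -/
def gammaFive : Matrix (Fin 4) (Fin 4) ℂ :=
  Matrix.reindex finSumFinEquiv finSumFinEquiv ((Matrix.fromBlocks 0 1 1 0 : Matrix (Fin 2 ⊕ Fin 2) (Fin 2 ⊕ Fin 2) ℂ))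

/-- α·x for x ∈ ℝ³. -/
def alphaDot (x : EuclideanSpace ℝ (Fin 3)) : Matrix (Fin 4) (Fin 4) ℂ :=
  ∑ j : Fin 3, (x j : ℂ) • diracAlpha j

/-- The (η,τ)-jump condition. -/
def JumpCond (c η τ : ℝ) (ν : EuclideanSpace ℝ (Fin 3)) (u v : Fin 4 → ℂ) : Prop :=
  (Complex.I * (c : ℂ)) • ((alphaDot ν) *ᵥ (u - v)) +
    ((1 : ℂ) / 2) • ((((η : ℂ) • (1 : Matrix (Fin 4) (Fin 4) ℂ) + (τ : ℂ) • diracBeta)) *ᵥ (u + v)) = 0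

def pauliDot (x : EuclideanSpace ℝ (Fin 3)) : Matrix (Fin 2) (Fin 2) ℂ :=
  ∑ j : Fin 3, (x j : ℂ) • pauli j

lemma pauliDot_eq (x : EuclideanSpace ℝ (Fin 3)) :
    pauliDot x = !![(x 2 : ℂ), x 0 - Complex.I * x 1; x 0 + Complex.I * x 1, -(x 2 : ℂ)] := by
  ext i j
  fin_cases i <;> fin_cases j <;> simp [pauliDot, pauli, Fin.sum_univ_three] <;> ring

lemma pauliDot_mul_self (x : EuclideanSpace ℝ (Fin 3)) :
    pauliDot x * pauliDot x = ((‖x‖ ^ 2 : ℝ) : ℂ) • 1 := by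
  rw [EuclideanSpace.real_norm_sq_eq, Fin.sum_univ_three, pauliDot_eq]
  ext i j
  fin_cases i <;> fin_cases j <;> simp [Matrix.mul_apply] <;> ring_nf <;> simp [Complex.I_sq]

abbrev blockEquiv : Matrix (Fin 2 ⊕ Fin 2) (Fin 2 ⊕ Fin 2) ℂ ≃ₐ[ℂ] Matrix (Fin 4) (Fin 4) ℂ :=
  reindexAlgEquiv ℂ ℂ finSumFinEquiv

lemma alphaDot_eq_blockEquiv (x : EuclideanSpace ℝ (Fin 3)) :
    alphaDot x = blockEquiv (fromBlocks 0 (pauliDot x) (pauliDot x) 0) := by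
  have hblocks : fromBlocks 0 (pauliDot x) (pauliDot x) 0 =
      ∑ j : Fin 3, (x j : ℂ) • fromBlocks 0 (pauli j) (pauli j) 0 := by
    simp [pauliDot, Fin.sum_univ_three, fromBlocks_add, fromBlocks_smul]
  rw [hblocks, map_sum]
  simp only [map_smul]
  rfl

lemma diracBeta_eq_blockEquiv : diracBeta = blockEquiv (fromBlocks 1 0 0 (-1)) := by
  simp [diracBeta]

lemma alphaDot_mul_self (x : EuclideanSpace ℝ (Fin 3)) :
    alphaDot x * alphaDot x = ((‖x‖ ^ 2 : ℝ) : ℂ) • 1 := by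
  rw [alphaDot_eq_blockEquiv, ← map_mul, fromBlocks_multiply, pauliDot_mul_self]
  simp only [mul_zero, zero_mul, add_zero, zero_add]
  rw [← smul_zero (((‖x‖ ^ 2 : ℝ) : ℂ)), ← fromBlocks_smul, fromBlocks_one, map_smul, map_one]

lemma diracBeta_mul_self : diracBeta * diracBeta = 1 := by
  rw [diracBeta_eq_blockEquiv, ← map_mul, fromBlocks_multiply]
  simp

lemma alphaDot_mul_diracBeta (x : EuclideanSpace ℝ (Fin 3)) :
    alphaDot x * diracBeta = -(diracBeta * alphaDot x) := by
  rw [alphaDot_eq_blockEquiv, diracBeta_eq_blockEquiv, ← map_mul, ← map_mul, ← map_neg,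
    fromBlocks_multiply, fromBlocks_multiply, fromBlocks_neg]
  simp

section Involution

variable {n K : Type*} [Fintype n] [DecidableEq n] [Field K]

lemma add_smul_mulVec_eq_zero_iff {B : Matrix n n K} {a s : K} (hs : s ≠ 0) (u : n → K) :
    (a • 1 + s • B) *ᵥ u = 0 ↔ B *ᵥ u = -(a / s) • u := by
  rw [add_mulVec, smul_mulVec, smul_mulVec, one_mulVec, add_eq_zero_iff_eq_neg',
    show -(a / s) • u = s⁻¹ • -(a • u) by rw [smul_neg, smul_smul, neg_smul, inv_mul_eq_div],
    eq_inv_smul_iff₀ hs]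

variable [NeZero (2 : K)]

lemma mulVec_add_eq_neg_smul_sub_iff {B : Matrix n n K} {k : K} (hk : k ≠ 0)
    (hB : B * B = k ^ 2 • 1) (u v : n → K) :
    B *ᵥ (u + v) = -k • (u - v) ↔ B *ᵥ u = -k • u ∧ B *ᵥ v = k • v := by
  constructor
  · intro hsum
    have hdiff : B *ᵥ (u - v) = -k • (u + v) := by
      apply smul_right_injective _ hk
      have hsq := congrArg (B *ᵥ ·) hsum
      simp only [mulVec_mulVec, hB, smul_mulVec, one_mulVec, mulVec_smul] at hsq
      linear_combination (norm := module) hsq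
    rw [mulVec_add] at hsum
    rw [mulVec_sub] at hdiff
    constructor <;> apply smul_right_injective _ (two_ne_zero (α := K))
    · linear_combination (norm := module) hsum + hdiff
    · linear_combination (norm := module) hsum - hdiff
  · rintro ⟨hu, hv⟩
    rw [mulVec_add, hu, hv]
    module

lemma smul_mulVec_add_half_smul_eq_zero_iff {A M : Matrix n n K} (hA : A * A = 1) (s : K)
    (w z : n → K) :
    s • (A *ᵥ w) + ((1 : K) / 2) • (M *ᵥ z) = 0 ↔ (A * M) *ᵥ z = -(2 * s) • w := by
  have hM (y : n → K) : M *ᵥ z = A *ᵥ y ↔ (A * M) *ᵥ z = y := by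
    rw [← mulVec_mulVec]
    exact ⟨fun h ↦ by rw [h, mulVec_mulVec, hA, one_mulVec],
      fun h ↦ by rw [← h, mulVec_mulVec, hA, one_mulVec]⟩
  rw [← hM, mulVec_smul, ← smul_right_inj (two_ne_zero (α := K)), smul_add, smul_smul,
    smul_smul, mul_one_div_cancel two_ne_zero, one_smul, smul_zero, add_eq_zero_iff_eq_neg',
    neg_smul]

end Involution

lemma mul_self_mul_add_smul_of_anticomm {K R : Type*} [Field K] [Ring R] [Algebra K R] {A β : R}
    (hA : A * A = 1) (hβ : β * β = 1) (hAβ : A * β = -(β * A)) (a b : K) :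
    (A * (a • 1 + b • β)) * (A * (a • 1 + b • β)) = (a ^ 2 - b ^ 2) • 1 := by
  have hcomm : (a • 1 + b • β) * A = A * (a • 1 - b • β) := by
    simp [add_mul, mul_sub, hAβ]
  calc (A * (a • 1 + b • β)) * (A * (a • 1 + b • β))
      = A * A * ((a • 1 - b • β) * (a • 1 + b • β)) := by
        rw [mul_assoc, ← mul_assoc _ A, hcomm]; noncomm_ring
    _ = (a ^ 2 - b ^ 2) • 1 := by
      simp only [hA, one_mul, sub_mul, mul_add, Algebra.mul_smul_comm, Algebra.smul_mul_assoc,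
        mul_one, hβ]
      module

theorem jump_condition_confinement (c η τ : ℝ) (hc : 0 < c)
    (h : η ^ 2 - τ ^ 2 = -(4 * c ^ 2))
    (ν : EuclideanSpace ℝ (Fin 3)) (hν : ‖ν‖ = 1) :
    ∀ u v : Fin 4 → ℂ, JumpCond c η τ ν u v ↔
      ((((2 * (c : ℂ)) • (1 : Matrix (Fin 4) (Fin 4) ℂ)
          - Complex.I • (alphaDot ν * ((η : ℂ) • (1 : Matrix (Fin 4) (Fin 4) ℂ)
            + (τ : ℂ) • diracBeta))) *ᵥ u = 0) ∧
       (((2 * (c : ℂ)) • (1 : Matrix (Fin 4) (Fin 4) ℂ)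
          + Complex.I • (alphaDot ν * ((η : ℂ) • (1 : Matrix (Fin 4) (Fin 4) ℂ)
            + (τ : ℂ) • diracBeta))) *ᵥ v = 0)) := by
  intro u v
  have hA : alphaDot ν * alphaDot ν = 1 := by simpa [hν] using alphaDot_mul_self ν
  rw [JumpCond, smul_mulVec_add_half_smul_eq_zero_iff hA,
    show 2 * (Complex.I * c) = 2 * c * Complex.I by ring]
  set B := alphaDot ν * ((η : ℂ) • (1 : Matrix (Fin 4) (Fin 4) ℂ) + (τ : ℂ) • diracBeta)
  have hB : B * B = (2 * c * Complex.I) ^ 2 • 1 := by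
    rw [mul_self_mul_add_smul_of_anticomm hA diracBeta_mul_self (alphaDot_mul_diracBeta ν)]
    congr 1
    have hC : (η : ℂ) ^ 2 - (τ : ℂ) ^ 2 = -(4 * (c : ℂ) ^ 2) := by exact_mod_cast h
    linear_combination hC - 4 * (c : ℂ) ^ 2 * Complex.I_sq
  have hk : (2 * c * Complex.I : ℂ) ≠ 0 := by simp [hc.ne']
  rw [mulVec_add_eq_neg_smul_sub_iff hk hB, sub_eq_add_neg, ← neg_smul,
    add_smul_mulVec_eq_zero_iff (neg_ne_zero.2 Complex.I_ne_zero),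
    add_smul_mulVec_eq_zero_iff Complex.I_ne_zero]
  simp only [div_neg, neg_neg, Complex.div_I]

end
end

section
/- (Proposition 4.2(ii), domain invariance under time reversal, pointwise form.) Let c > 0, η, τ ∈ ℝ, and let ν ∈ ℝ³ be a unit vector. Let T : ℂ⁴ → ℂ⁴ be the antilinear map T v := −i γ₅ α₂ v̄, where v̄ denotes entrywise complex conjugation. Then for all u, v ∈ ℂ⁴ the pair (u, v) satisfies the (η,τ)-jump condition if and only if the pair (T u, T v) satisfies the (η,τ)-jump condition. -/
open Matrix

noncomputable section

/-- The (antilinear) time reversal operator T v = −i γ₅ α₂ v̄. -/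
def timeRev (v : Fin 4 → ℂ) : Fin 4 → ℂ :=
  (-Complex.I) • ((gammaFive * diracAlpha 1) *ᵥ (fun k => (starRingEnd ℂ) (v k)))


lemma dA0 : diracAlpha 0 = !![0,0,0,1; 0,0,1,0; 0,1,0,0; 1,0,0,0] := by
  ext i j; fin_cases i <;> fin_cases j <;> rfl

lemma dA1 : diracAlpha 1 = !![0,0,0,-Complex.I; 0,0,Complex.I,0; 0,-Complex.I,0,0; Complex.I,0,0,0] := by
  ext i j; fin_cases i <;> fin_cases j <;> rfl

lemma dA2 : diracAlpha 2 = !![0,0,1,0; 0,0,0,-1; 1,0,0,0; 0,-1,0,0] := by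
  ext i j; fin_cases i <;> fin_cases j <;> first | rfl | exact neg_zero

lemma dB : diracBeta = !![1,0,0,0; 0,1,0,0; 0,0,-1,0; 0,0,0,-1] := by
  ext i j; fin_cases i <;> fin_cases j <;> first | rfl | exact neg_zero

lemma g5 : gammaFive = !![0,0,1,0; 0,0,0,1; 1,0,0,0; 0,1,0,0] := by
  ext i j; fin_cases i <;> fin_cases j <;> rfl

lemma Mconc : gammaFive * diracAlpha 1 =
    !![0,-Complex.I,0,0; Complex.I,0,0,0; 0,0,0,-Complex.I; 0,0,Complex.I,0] := by
  rw [g5, dA1]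
  ext i j; fin_cases i <;> fin_cases j <;>
    simp [Matrix.mul_apply, Fin.sum_univ_four, Matrix.vecHead, Matrix.vecTail]

lemma MM : (gammaFive * diracAlpha 1) * (gammaFive * diracAlpha 1) = 1 := by
  rw [Mconc]
  ext i j; fin_cases i <;> fin_cases j <;>
    simp [Matrix.mul_apply, Fin.sum_univ_four, Matrix.one_apply,
      Matrix.vecHead, Matrix.vecTail, Complex.I_mul_I]

lemma timeRev_eq (v : Fin 4 → ℂ) :
    timeRev v = ![-((starRingEnd ℂ) (v 1)), (starRingEnd ℂ) (v 0),
      -((starRingEnd ℂ) (v 3)), (starRingEnd ℂ) (v 2)] := by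
  funext k
  fin_cases k <;>
    simp [timeRev, Mconc, Matrix.mulVec, dotProduct, Fin.sum_univ_four,
      Matrix.vecHead, Matrix.vecTail, ← mul_assoc, Complex.I_mul_I]

lemma I2' : Complex.I ^ 2 = -1 := Complex.I_sq
lemma I3' : Complex.I ^ 3 = -Complex.I := by
  rw [show (3:ℕ) = 2 + 1 from rfl, pow_add, I2', pow_one]; ring
lemma I4' : Complex.I ^ 4 = 1 := by
  rw [show (4:ℕ) = 2 + 2 from rfl, pow_add, I2']; ring

set_option maxHeartbeats 2000000 in
lemma key (c η τ : ℝ) (ν : EuclideanSpace ℝ (Fin 3)) (u v : Fin 4 → ℂ) :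
    (Complex.I * (c : ℂ)) • ((alphaDot ν) *ᵥ (timeRev u - timeRev v)) +
      ((1 : ℂ) / 2) • ((((η : ℂ) • (1 : Matrix (Fin 4) (Fin 4) ℂ) + (τ : ℂ) • diracBeta)) *ᵥ (timeRev u + timeRev v))
    = (-Complex.I) • ((gammaFive * diracAlpha 1) *ᵥ fun k => (starRingEnd ℂ)
        (((Complex.I * (c : ℂ)) • ((alphaDot ν) *ᵥ (u - v)) +
          ((1 : ℂ) / 2) • ((((η : ℂ) • (1 : Matrix (Fin 4) (Fin 4) ℂ) + (τ : ℂ) • diracBeta)) *ᵥ (u + v))) k)) := by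
  rw [Mconc]
  funext k
  fin_cases k <;>
  · simp [timeRev_eq, alphaDot, Fin.sum_univ_three, dA0, dA1, dA2, dB,
      Matrix.mulVec, dotProduct, Fin.sum_univ_four, Matrix.one_apply,
      Matrix.smul_apply, Matrix.add_apply, Complex.conj_ofReal, Matrix.vecHead, Matrix.vecTail,
      map_ofNat]
    ring_nf
    simp only [I2', I3', I4']
    ring

theorem jump_condition_timeRev_invariance (c η τ : ℝ) (hc : 0 < c)
    (ν : EuclideanSpace ℝ (Fin 3)) (hν : ‖ν‖ = 1) :
    ∀ u v : Fin 4 → ℂ, JumpCond c η τ ν u v ↔ JumpCond c η τ ν (timeRev u) (timeRev v) := by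
  intro u v
  unfold JumpCond
  rw [key c η τ ν u v]
  constructor
  · intro h
    rw [h]
    simp only [Pi.zero_apply, map_zero]
    rw [show (fun _ : Fin 4 => (0:ℂ)) = 0 from rfl, Matrix.mulVec_zero, smul_zero]
  · intro h
    rcases smul_eq_zero.mp h with h1 | h2
    · exact absurd h1 (by simp [Complex.I_ne_zero])
    · have h3 : (fun k => (starRingEnd ℂ)
          (((Complex.I * (c : ℂ)) • ((alphaDot ν) *ᵥ (u - v)) +
            ((1 : ℂ) / 2) • ((((η : ℂ) • (1 : Matrix (Fin 4) (Fin 4) ℂ) + (τ : ℂ) • diracBeta)) *ᵥ (u + v))) k))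
          = 0 := by
        have := congrArg (fun w => (gammaFive * diracAlpha 1) *ᵥ w) h2
        simpa [Matrix.mulVec_mulVec, MM] using this
      funext k
      have hk := congrFun h3 k
      simpa only [Complex.conj_conj, map_zero, Pi.zero_apply]
        using congrArg (starRingEnd ℂ) hk

end
end

section
/- (Adjoint symmetry of the Green function.) Let m, c > 0 and λ ∈ ℂ ∖ ((−∞, −mc²] ∪ [mc², ∞)). Then λ̄ ∈ ℂ ∖ ((−∞, −mc²] ∪ [mc², ∞)) as well, and for every x ∈ ℝ³ ∖ {0} the conjugate transpose of G_λ(x) satisfies (G_λ(x))* = G_{λ̄}(−x). -/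
open Matrix

noncomputable section

/-- The Green function of the free Dirac operator, with `k = k(λ)` the branch of
`√(λ²/c² − (mc)²)` with positive imaginary part supplied as a parameter. -/
def greenFun (m c : ℝ) (lam k : ℂ) (x : EuclideanSpace ℝ (Fin 3)) :
    Matrix (Fin 4) (Fin 4) ℂ :=
  (Complex.exp (Complex.I * k * (‖x‖ : ℂ)) / (4 * (Real.pi : ℂ) * (‖x‖ : ℂ))) •
    ((lam / (c : ℂ) ^ 2) • (1 : Matrix (Fin 4) (Fin 4) ℂ) + (m : ℂ) • diracBeta +
      ((1 - Complex.I * k * (‖x‖ : ℂ)) * (Complex.I / ((c : ℂ) * (‖x‖ : ℂ) ^ 2))) • alphaDot x)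


lemma pauli_herm (j : Fin 3) : (pauli j)ᴴ = pauli j := by
  fin_cases j <;> simp [pauli] <;>
    ext i l <;> fin_cases i <;> fin_cases l <;>
      simp [Matrix.conjTranspose_apply]

lemma alpha_herm (j : Fin 3) : (diracAlpha j)ᴴ = diracAlpha j := by
  simp [diracAlpha, Matrix.conjTranspose_submatrix, Matrix.fromBlocks_conjTranspose, pauli_herm]

lemma beta_herm : diracBetaᴴ = diracBeta := by
  simp [diracBeta, Matrix.conjTranspose_submatrix, Matrix.fromBlocks_conjTranspose]

lemma alphaDot_herm (x : EuclideanSpace ℝ (Fin 3)) : (alphaDot x)ᴴ = alphaDot x := by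
  simp [alphaDot, Matrix.conjTranspose_sum, Matrix.conjTranspose_smul, alpha_herm,
    Complex.conj_ofReal]

lemma alphaDot_neg (x : EuclideanSpace ℝ (Fin 3)) : alphaDot (-x) = -alphaDot x := by
  simp only [alphaDot, ← Finset.sum_neg_distrib]
  refine Finset.sum_congr rfl fun j _ => ?_
  have h : (-x) j = -(x j) := rfl
  rw [h, ← neg_smul]
  norm_cast

theorem green_adjoint_symmetry (m c : ℝ) (hm : 0 < m) (hc : 0 < c) (lam k k' : ℂ)
    (hlam : ∀ r : ℝ, (r : ℂ) = lam → -(m * c ^ 2) < r ∧ r < m * c ^ 2)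
    (hk : k ^ 2 = lam ^ 2 / (c : ℂ) ^ 2 - ((m : ℂ) * (c : ℂ)) ^ 2) (hkim : 0 < k.im)
    (hk' : k' ^ 2 = ((starRingEnd ℂ) lam) ^ 2 / (c : ℂ) ^ 2 - ((m : ℂ) * (c : ℂ)) ^ 2)
    (hk'im : 0 < k'.im) :
    (∀ r : ℝ, (r : ℂ) = (starRingEnd ℂ) lam → -(m * c ^ 2) < r ∧ r < m * c ^ 2) ∧
    (∀ x : EuclideanSpace ℝ (Fin 3), x ≠ 0 →
      (greenFun m c lam k x)ᴴ = greenFun m c ((starRingEnd ℂ) lam) k' (-x)) := by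
  -- relation between k' and conj k
  have hck : (starRingEnd ℂ) k = -k' := by
    have h2 : ((starRingEnd ℂ) k) ^ 2 = k' ^ 2 := by
      have := congrArg (starRingEnd ℂ) hk
      simp only [map_pow, map_sub, map_div₀, _root_.map_mul, Complex.conj_ofReal] at this
      rw [this, hk']
    have h3 : ((starRingEnd ℂ) k - k') * ((starRingEnd ℂ) k + k') = 0 := by ring_nf; linear_combination h2
    rcases mul_eq_zero.mp h3 with h | h
    · exfalso
      have heq : (starRingEnd ℂ) k = k' := sub_eq_zero.mp h
      have : ((starRingEnd ℂ) k).im = k'.im := by rw [heq]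
      simp [Complex.conj_im] at this
      linarith
    · exact eq_neg_of_add_eq_zero_left h
  constructor
  · intro r hr
    apply hlam r
    have := congrArg (starRingEnd ℂ) hr
    simpa [Complex.conj_ofReal] using this
  · intro x hx
    have hnx : ‖(-x : EuclideanSpace ℝ (Fin 3))‖ = ‖x‖ := norm_neg x
    rw [greenFun, greenFun, Matrix.conjTranspose_smul, Matrix.conjTranspose_add,
      Matrix.conjTranspose_add, Matrix.conjTranspose_smul, Matrix.conjTranspose_smul,
      Matrix.conjTranspose_smul, Matrix.conjTranspose_one, beta_herm, alphaDot_herm,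
      alphaDot_neg, hnx, smul_neg, ← neg_smul]
    have e1 : (starRingEnd ℂ) (Complex.exp (Complex.I * k * (‖x‖ : ℂ)) /
        (4 * (Real.pi : ℂ) * (‖x‖ : ℂ))) =
        Complex.exp (Complex.I * k' * (‖x‖ : ℂ)) / (4 * (Real.pi : ℂ) * (‖x‖ : ℂ)) := by
      rw [map_div₀, ← Complex.exp_conj]
      congr 1
      · congr 1
        rw [_root_.map_mul, _root_.map_mul, Complex.conj_I, Complex.conj_ofReal, hck]
        ring
      · simp only [_root_.map_mul, map_ofNat, Complex.conj_ofReal]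
    have e3 : (starRingEnd ℂ) ((1 - Complex.I * k * (‖x‖ : ℂ)) *
        (Complex.I / ((c : ℂ) * (‖x‖ : ℂ) ^ 2))) =
        -((1 - Complex.I * k' * (‖x‖ : ℂ)) * (Complex.I / ((c : ℂ) * (‖x‖ : ℂ) ^ 2))) := by
      simp only [_root_.map_mul, map_sub, _root_.map_one, map_div₀, map_pow, Complex.conj_I,
        Complex.conj_ofReal, hck]
      ring
    simp only [Complex.star_def, e1, e3, map_div₀, map_pow, Complex.conj_ofReal, neg_smul]

end
end
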